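/- arXiv:2106.06508 — 3 statements merged into one kernel-verified Lean document; each statement's English description precedes it below -/
import Mathlib

section
/- Assume additionally that β(s) > 0 for all s ∈ S. Then the matrix I − P·(I−B) is invertible, and the matrix P^β₁ = (I − P·(I−B))⁻¹·P·B has all entries nonnegative and every row sum equal to 1; that is, P^β₁ is a stochastic matrix. (This is the γ = 1 case of the transition matrix P^β.) -/
/-!
With `Q = P (I - B)`, row `s` of `Q` is nonnegative with sum `1 - (P β) s < 1`, so `‖Q‖ < 1` in
the `ℓ∞` operator norm. Hence `I - Q` is invertible with inverse the Neumann series `∑ Qᵏ`,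
which is entrywise nonnegative. Since `P 𝟙 = 𝟙`, we have `(I - Q) 𝟙 = P B 𝟙`, so
`(I - Q)⁻¹ P B 𝟙 = 𝟙`.
-/

open Matrix

attribute [local instance] Matrix.linftyOpNormedAddCommGroup Matrix.linftyOpNormedRing
  Matrix.linftyOpNormedAlgebra

namespace Matrix

variable {n : Type*}

lemma diagonal_apply_nonneg [DecidableEq n] {d : n → ℝ} (hd : ∀ i, 0 ≤ d i) (i j : n) :
    0 ≤ diagonal d i j := by
  rw [diagonal_apply]
  split_ifs
  exacts [hd i, le_rfl]

variable [Fintype n]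

lemma mul_apply_nonneg {A B : Matrix n n ℝ} (hA : ∀ i j, 0 ≤ A i j) (hB : ∀ i j, 0 ≤ B i j)
    (i j : n) : 0 ≤ (A * B) i j :=
  Finset.sum_nonneg fun k _ => mul_nonneg (hA i k) (hB k j)

lemma linfty_opNorm_lt_one_of_nonneg_of_sum_row_lt_one {Q : Matrix n n ℝ}
    (hQ0 : ∀ i j, 0 ≤ Q i j) (hQ1 : ∀ i, ∑ j, Q i j < 1) : ‖Q‖ < 1 := by
  rw [linfty_opNorm_def, ← NNReal.coe_one, NNReal.coe_lt_coe,
    Finset.sup_lt_iff (by exact zero_lt_one)]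
  intro i _
  rw [← NNReal.coe_lt_coe]
  push_cast
  simpa only [Real.norm_of_nonneg (hQ0 i _)] using hQ1 i

variable [DecidableEq n]

lemma inv_one_sub_apply_nonneg {Q : Matrix n n ℝ} (hQ0 : ∀ i j, 0 ≤ Q i j) (hQ : ‖Q‖ < 1)
    (i j : n) : 0 ≤ (1 - Q)⁻¹ i j := by
  have hsum : Summable fun k : ℕ => Q ^ k := summable_geometric_of_norm_lt_one hQ
  rw [nonsing_inv_eq_ringInverse, ← geom_series_eq_inverse Q hQ]
  exact (Pi.hasSum.mp (Pi.hasSum.mp hsum.hasSum i) j).nonneg fun k => pow_apply_nonneg hQ0 k i j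

lemma one_sub_mul_one_sub_mulVec_one {P : Matrix n n ℝ} (hP : P *ᵥ 1 = 1) (B : Matrix n n ℝ) :
    (1 - P * (1 - B)) *ᵥ 1 = (P * B) *ᵥ 1 := by
  rw [mul_sub, mul_one, sub_mulVec, sub_mulVec, one_mulVec, hP, sub_sub_cancel]

lemma mul_one_sub_diagonal_apply (P : Matrix n n ℝ) (β : n → ℝ) (i j : n) :
    (P * (1 - diagonal β)) i j = P i j * (1 - β j) := by
  rw [← diagonal_one, diagonal_sub, mul_diagonal]

variable {P : Matrix n n ℝ} {β : n → ℝ}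

lemma mul_one_sub_diagonal_apply_nonneg (hP : P ∈ rowStochastic ℝ n) (hβ1 : ∀ i, β i ≤ 1)
    (i j : n) : 0 ≤ (P * (1 - diagonal β)) i j := by
  rw [mul_one_sub_diagonal_apply]
  exact mul_nonneg (hP.1 i j) (sub_nonneg.mpr (hβ1 j))

lemma sum_row_mul_one_sub_diagonal_lt_one (hP : P ∈ rowStochastic ℝ n)
    (hβpos : ∀ i, 0 < β i) (i : n) : ∑ j, (P * (1 - diagonal β)) i j < 1 := by
  have hPβ : 0 < ∑ j, P i j * β j := by
    obtain ⟨j, -, hj⟩ := (Finset.sum_pos_iff_of_nonneg fun j _ => hP.1 i j).mp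
      ((sum_row_of_mem_rowStochastic hP i).symm ▸ zero_lt_one)
    exact Finset.sum_pos' (fun k _ => mul_nonneg (hP.1 i k) (hβpos k).le)
      ⟨j, Finset.mem_univ j, mul_pos hj (hβpos j)⟩
  simp only [mul_one_sub_diagonal_apply, mul_one_sub, Finset.sum_sub_distrib,
    sum_row_of_mem_rowStochastic hP i]
  linarith

lemma linfty_opNorm_mul_one_sub_diagonal_lt_one (hP : P ∈ rowStochastic ℝ n)
    (hβpos : ∀ i, 0 < β i) (hβ1 : ∀ i, β i ≤ 1) : ‖P * (1 - diagonal β)‖ < 1 :=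
  linfty_opNorm_lt_one_of_nonneg_of_sum_row_lt_one (mul_one_sub_diagonal_apply_nonneg hP hβ1)
    (sum_row_mul_one_sub_diagonal_lt_one hP hβpos)

lemma inv_one_sub_mul_one_sub_diagonal_mul_mem_rowStochastic (hP : P ∈ rowStochastic ℝ n)
    (hβpos : ∀ i, 0 < β i) (hβ1 : ∀ i, β i ≤ 1) :
    (1 - P * (1 - diagonal β))⁻¹ * P * diagonal β ∈ rowStochastic ℝ n := by
  have hQ := linfty_opNorm_mul_one_sub_diagonal_lt_one hP hβpos hβ1
  refine ⟨mul_apply_nonneg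
    (mul_apply_nonneg (inv_one_sub_apply_nonneg (mul_one_sub_diagonal_apply_nonneg hP hβ1) hQ)
      hP.1) (diagonal_apply_nonneg fun i => (hβpos i).le), ?_⟩
  have hdet := (isUnit_iff_isUnit_det _).mp (isUnit_one_sub_of_norm_lt_one hQ)
  rw [Matrix.mul_assoc, ← mulVec_mulVec, ← one_sub_mul_one_sub_mulVec_one hP.2,
    mulVec_mulVec, nonsing_inv_mul _ hdet, one_mulVec]

end Matrix

theorem stmt_5_general {S : Type*} [Fintype S] [DecidableEq S]
    (P : Matrix S S ℝ) (hP0 : ∀ s s', 0 ≤ P s s') (hP1 : ∀ s, ∑ s', P s s' = 1)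
    (β : S → ℝ) (hβ1 : ∀ s, β s ≤ 1)
    (hβpos : ∀ s, 0 < β s) :
    let B := diagonal β
    let Pβ₁ := (1 - P * (1 - B))⁻¹ * P * B
    IsUnit (1 - P * (1 - B)) ∧ (∀ s s', 0 ≤ Pβ₁ s s') ∧ (∀ s, ∑ s', Pβ₁ s s' = 1) := by
  have hP : P ∈ rowStochastic ℝ S := mem_rowStochastic_iff_sum.mpr ⟨hP0, hP1⟩
  exact ⟨isUnit_one_sub_of_norm_lt_one (linfty_opNorm_mul_one_sub_diagonal_lt_one hP hβpos hβ1),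
    mem_rowStochastic_iff_sum.mp
      (inv_one_sub_mul_one_sub_diagonal_mul_mem_rowStochastic hP hβpos hβ1)⟩

/-- if `β(s) > 0` for all `s`, then `I − P·(I−B)` is invertible and
`P^β₁ = (I − P·(I−B))⁻¹·P·B` is a stochastic matrix (nonnegative entries, row sums 1). -/
theorem stmt_5 {S : Type*} [Fintype S] [Nonempty S] [DecidableEq S]
    (P : Matrix S S ℝ) (hP0 : ∀ s s', 0 ≤ P s s') (hP1 : ∀ s, ∑ s', P s s' = 1)
    (β : S → ℝ) (hβ0 : ∀ s, 0 ≤ β s) (hβ1 : ∀ s, β s ≤ 1)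
    (hβpos : ∀ s, 0 < β s) :
    let B := diagonal β
    let Pβ₁ := (1 - P * (1 - B))⁻¹ * P * B
    IsUnit (1 - P * (1 - B)) ∧ (∀ s s', 0 ≤ Pβ₁ s s') ∧ (∀ s, ∑ s', Pβ₁ s s' = 1) :=
  stmt_5_general P hP0 hP1 β hβ1 hβpos
end

section
/- Let 0 ≤ γ < 1, assume β(s) > 0 for all s ∈ S, and let d : S → ℝ satisfy d(s) > 0 for all s and, as a row vector, d·P = d. Let D be the diagonal matrix with D(s,s) = d(s), and let Φ : Matrix S (Fin k) ℝ have linearly independent columns (full column rank). Then the k×k matrix A = Φᵀ·D·B·(I − P^β)·Φ satisfies wᵀ·A·w > 0 for every nonzero w ∈ ℝ^k; in particular, A is invertible. -/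
/-!
Put `μ = d β`, so that `D B = diagonal μ` and `wᵀ A w = xᵀ diagonal μ (1 - P^β) x` with
`x = Φ w`, which is nonzero when `w` is. The kernel `P^β` is nonnegative, its row sums are at
most `γ`, and stationarity of `d` gives `μ P^β ≤ γ μ`; by the Schur test (AM-GM on
`x_s x_s'`) these two bounds give `xᵀ diagonal μ P^β x ≤ γ ∑ μ x²`, so the form is at least
`(1 - γ) ∑ μ x² > 0`. All the needed nonnegativity of `(1 - γ P (1 - B))⁻¹` comes from the
minimum principle for `1 - K` with `K ≥ 0` of row sums `< 1`.
-/

open Matrix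

section MinimumPrinciple

variable {S R : Type*} [Fintype S] [DecidableEq S] [Field R] [LinearOrder R]
  [IsStrictOrderedRing R] {K : Matrix S S R}

theorem nonneg_of_nonneg_one_sub_mulVec (hK0 : ∀ i j, 0 ≤ K i j)
    (hK1 : ∀ i, ∑ j, K i j < 1) {x : S → R} (hx : 0 ≤ (1 - K) *ᵥ x) : 0 ≤ x := by
  by_contra hneg
  obtain ⟨i, hi⟩ : ∃ i, x i < 0 := by simpa [Pi.le_def] using hneg
  have : Nonempty S := ⟨i⟩
  obtain ⟨i₀, hmin⟩ := Finite.exists_min x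
  have hrow : ((1 - K) *ᵥ x) i₀ = x i₀ - ∑ j, K i₀ j * x j := by
    simp only [sub_mulVec, one_mulVec, Pi.sub_apply]
    rfl
  have hbound : (∑ j, K i₀ j) * x i₀ ≤ ∑ j, K i₀ j * x j := by
    rw [Finset.sum_mul]
    exact Finset.sum_le_sum fun j _ => mul_le_mul_of_nonneg_left (hmin j) (hK0 i₀ j)
  have hx₀ : 0 ≤ ((1 - K) *ᵥ x) i₀ := hx i₀
  have := mul_neg_of_pos_of_neg (sub_pos.2 (hK1 i₀)) ((hmin i).trans_lt hi)
  linarith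

theorem isUnit_det_one_sub (hK0 : ∀ i j, 0 ≤ K i j) (hK1 : ∀ i, ∑ j, K i j < 1) :
    IsUnit (1 - K).det := by
  rw [isUnit_iff_ne_zero]
  intro hdet
  obtain ⟨v, hv, hKv⟩ := exists_mulVec_eq_zero_iff.2 hdet
  have hpos := nonneg_of_nonneg_one_sub_mulVec hK0 hK1 hKv.ge
  have hneg := nonneg_of_nonneg_one_sub_mulVec hK0 hK1 (x := -v) (by simp [mulVec_neg, hKv])
  exact hv (le_antisymm (by simpa using hneg) hpos)

theorem inv_one_sub_nonneg (hK0 : ∀ i j, 0 ≤ K i j) (hK1 : ∀ i, ∑ j, K i j < 1) (i j : S) :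
    0 ≤ (1 - K)⁻¹ i j := by
  have hcol : (1 - K) *ᵥ ((1 - K)⁻¹ *ᵥ Pi.single j 1) = Pi.single j 1 := by
    rw [mulVec_mulVec, mul_nonsing_inv _ (isUnit_det_one_sub hK0 hK1), one_mulVec]
  have := nonneg_of_nonneg_one_sub_mulVec hK0 hK1 (hcol ▸ Pi.single_nonneg.2 zero_le_one) i
  simpa [mulVec_single_one] using this

end MinimumPrinciple

theorem vecMul_le_vecMul_of_nonneg {m n R : Type*} [Fintype m] [Semiring R] [PartialOrder R]
    [IsOrderedRing R] {A : Matrix m n R} (hA : ∀ i j, 0 ≤ A i j) {x y : m → R} (hxy : x ≤ y) : x ᵥ* A ≤ y ᵥ* A :=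
  fun j => Finset.sum_le_sum fun i _ => mul_le_mul_of_nonneg_right (hxy i) (hA i j)

section WeightedQuadraticForm

variable {S R : Type*} [Fintype S] [Field R] [LinearOrder R] [IsStrictOrderedRing R]
  {K : Matrix S S R} {μ : S → R} {c : R}

theorem sum_sum_mul_le_of_row_sum_le_of_vecMul_le (hK0 : ∀ i j, 0 ≤ K i j) (hμ : 0 ≤ μ)
    (hrow : ∀ i, ∑ j, K i j ≤ c) (hcol : μ ᵥ* K ≤ c • μ) (x : S → R) :
    ∑ i, ∑ j, μ i * K i j * (x i * x j) ≤ c * ∑ i, μ i * x i ^ 2 := by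
  have hrows : ∑ i, ∑ j, μ i * K i j * x i ^ 2 ≤ c * ∑ i, μ i * x i ^ 2 := by
    rw [Finset.mul_sum]
    refine Finset.sum_le_sum fun i _ => ?_
    calc ∑ j, μ i * K i j * x i ^ 2 = (∑ j, K i j) * (μ i * x i ^ 2) := by
          rw [Finset.sum_mul]; exact Finset.sum_congr rfl fun j _ => by ring
      _ ≤ c * (μ i * x i ^ 2) :=
          mul_le_mul_of_nonneg_right (hrow i) (mul_nonneg (hμ i) (sq_nonneg _))
  have hcols : ∑ i, ∑ j, μ i * K i j * x j ^ 2 ≤ c * ∑ j, μ j * x j ^ 2 := by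
    rw [Finset.sum_comm, Finset.mul_sum]
    refine Finset.sum_le_sum fun j _ => ?_
    calc ∑ i, μ i * K i j * x j ^ 2 = (μ ᵥ* K) j * x j ^ 2 := Finset.sum_mul _ _ _ |>.symm
      _ ≤ c * μ j * x j ^ 2 := mul_le_mul_of_nonneg_right (hcol j) (sq_nonneg _)
      _ = c * (μ j * x j ^ 2) := mul_assoc _ _ _
  -- AM-GM: `2 x_i x_j ≤ x_i ^ 2 + x_j ^ 2`
  have hamgm : ∑ i, ∑ j, μ i * K i j * (x i * x j)
      ≤ (∑ i, ∑ j, μ i * K i j * x i ^ 2 + ∑ i, ∑ j, μ i * K i j * x j ^ 2) / 2 := by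
    simp only [← Finset.sum_add_distrib, Finset.sum_div]
    refine Finset.sum_le_sum fun i _ => Finset.sum_le_sum fun j _ => ?_
    nlinarith [mul_nonneg (mul_nonneg (hμ i) (hK0 i j)) (sq_nonneg (x i - x j))]
  linarith

theorem dotProduct_diagonal_mul_one_sub_mulVec_pos [DecidableEq S] (hK0 : ∀ i j, 0 ≤ K i j)
    (hμ : ∀ i, 0 < μ i) (hrow : ∀ i, ∑ j, K i j ≤ c) (hcol : μ ᵥ* K ≤ c • μ) (hc : c < 1)
    {x : S → R} (hx : x ≠ 0) : 0 < x ⬝ᵥ ((diagonal μ * (1 - K)) *ᵥ x) := by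
  have hexpand : x ⬝ᵥ ((diagonal μ * (1 - K)) *ᵥ x)
      = ∑ i, μ i * x i ^ 2 - ∑ i, ∑ j, μ i * K i j * (x i * x j) := by
    rw [Matrix.mul_sub, Matrix.mul_one, sub_mulVec, dotProduct_sub]
    congr 1
    · simp only [dotProduct, mulVec_diagonal]
      exact Finset.sum_congr rfl fun i _ => by ring
    · simp only [dotProduct, mulVec, diagonal_mul, Finset.mul_sum]
      exact Finset.sum_congr rfl fun i _ => Finset.sum_congr rfl fun j _ => by ring
  obtain ⟨i, hi⟩ := Function.ne_iff.1 hx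
  have hnorm : 0 < ∑ i, μ i * x i ^ 2 :=
    Finset.sum_pos' (fun j _ => mul_nonneg (hμ j).le (sq_nonneg _))
      ⟨i, Finset.mem_univ _, mul_pos (hμ i) (sq_pos_of_ne_zero hi)⟩
  have := sum_sum_mul_le_of_row_sum_le_of_vecMul_le hK0 (fun j => (hμ j).le) hrow hcol x
  nlinarith

end WeightedQuadraticForm

section StoppedKernel

variable {S R : Type*} [Fintype S] [DecidableEq S] [Field R]

noncomputable def continuationKernel (P : Matrix S S R) (β : S → R) (γ : R) : Matrix S S R :=
  γ • (P * (1 - diagonal β))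

/-- `γ (1 - γ P (1 - B))⁻¹ P B = ∑ₙ γⁿ⁺¹ (P (1 - B))ⁿ P B`: the discounted law of the state at
which a `P`-chain is first stopped, stopping in each newly reached state `s` with probability
`β s`. -/
noncomputable def stoppedKernel (P : Matrix S S R) (β : S → R) (γ : R) : Matrix S S R :=
  γ • ((1 - continuationKernel P β γ)⁻¹ * P * diagonal β)

variable {P : Matrix S S R} {β : S → R} {γ : R}

theorem continuationKernel_apply (i j : S) :
    continuationKernel P β γ i j = γ * (P i j * (1 - β j)) := by
  simp [continuationKernel, mul_diagonal, mul_sub]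

variable [LinearOrder R] [IsStrictOrderedRing R]

theorem continuationKernel_nonneg (hP0 : ∀ i j, 0 ≤ P i j) (hβ1 : ∀ i, β i ≤ 1) (hγ0 : 0 ≤ γ)
    (i j : S) : 0 ≤ continuationKernel P β γ i j := by
  rw [continuationKernel_apply]
  exact mul_nonneg hγ0 (mul_nonneg (hP0 i j) (sub_nonneg.2 (hβ1 j)))

theorem continuationKernel_row_sum_lt_one (hP0 : ∀ i j, 0 ≤ P i j) (hP1 : ∀ i, ∑ j, P i j = 1)
    (hβ0 : ∀ i, 0 ≤ β i) (hγ0 : 0 ≤ γ) (hγ1 : γ < 1) (i : S) :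
    ∑ j, continuationKernel P β γ i j < 1 :=
  calc ∑ j, continuationKernel P β γ i j = γ * ∑ j, P i j * (1 - β j) := by
        simp only [continuationKernel_apply, Finset.mul_sum]
    _ ≤ γ * ∑ j, P i j := by
        gcongr with j
        exact mul_le_of_le_one_right (hP0 i j) (sub_le_self _ (hβ0 j))
    _ < 1 := by rw [hP1 i, mul_one]; exact hγ1

theorem stoppedKernel_nonneg (hP0 : ∀ i j, 0 ≤ P i j) (hP1 : ∀ i, ∑ j, P i j = 1)
    (hβ0 : ∀ i, 0 ≤ β i) (hβ1 : ∀ i, β i ≤ 1) (hγ0 : 0 ≤ γ) (hγ1 : γ < 1) (i j : S) :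
    0 ≤ stoppedKernel P β γ i j := by
  have hR := inv_one_sub_nonneg (continuationKernel_nonneg hP0 hβ1 hγ0)
    (continuationKernel_row_sum_lt_one hP0 hP1 hβ0 hγ0 hγ1)
  rw [stoppedKernel, Matrix.smul_apply, mul_diagonal, mul_apply, smul_eq_mul]
  exact mul_nonneg hγ0 (mul_nonneg (Finset.sum_nonneg fun t _ =>
    mul_nonneg (hR i t) (hP0 t j)) (hβ0 j))

theorem stoppedKernel_row_sum_le (hP0 : ∀ i j, 0 ≤ P i j) (hP1 : ∀ i, ∑ j, P i j = 1)
    (hβ0 : ∀ i, 0 ≤ β i) (hβ1 : ∀ i, β i ≤ 1) (hγ0 : 0 ≤ γ) (hγ1 : γ < 1) (i : S) :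
    ∑ j, stoppedKernel P β γ i j ≤ γ := by
  have hK0 := continuationKernel_nonneg hP0 hβ1 hγ0
  have hK1 := continuationKernel_row_sum_lt_one hP0 hP1 hβ0 hγ0 hγ1
  have hKR : (1 - continuationKernel P β γ) * (1 - continuationKernel P β γ)⁻¹ = 1 :=
    mul_nonsing_inv _ (isUnit_det_one_sub hK0 hK1)
  have hB : diagonal β *ᵥ 1 = β :=
    funext fun i => by rw [mulVec_diagonal, Pi.one_apply, mul_one]
  have hP1' : P *ᵥ 1 = 1 := funext fun i => by simp [mulVec, dotProduct, hP1 i]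
  have hK1' : continuationKernel P β γ *ᵥ 1 = γ • P *ᵥ (1 - β) := by
    rw [continuationKernel, smul_mulVec, ← mulVec_mulVec, sub_mulVec, one_mulVec, hB]
  have hPβ : P *ᵥ β = 1 - P *ᵥ (1 - β) := by rw [mulVec_sub, hP1', sub_sub_cancel]
  have hq : 0 ≤ P *ᵥ (1 - β) := fun i =>
    Finset.sum_nonneg fun j _ => mul_nonneg (hP0 i j) (sub_nonneg.2 (hβ1 j))
  -- `(1 - K) 1 - P β = (1 - γ) P (1 - β) ≥ 0`, so the minimum principle bounds `(1 - K)⁻¹ P β`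
  have hle : (1 - continuationKernel P β γ)⁻¹ *ᵥ (P *ᵥ β) ≤ 1 := by
    refine sub_nonneg.1 (nonneg_of_nonneg_one_sub_mulVec hK0 hK1 ?_)
    rw [mulVec_sub, mulVec_mulVec, hKR, one_mulVec, sub_mulVec, one_mulVec, hK1', hPβ]
    intro i
    have hqi : 0 ≤ (P *ᵥ (1 - β)) i := hq i
    simp only [Pi.sub_apply, Pi.smul_apply, Pi.zero_apply, Pi.one_apply, smul_eq_mul]
    nlinarith
  calc ∑ j, stoppedKernel P β γ i j = (stoppedKernel P β γ *ᵥ 1) i := by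
        simp [mulVec, dotProduct]
    _ = γ * ((1 - continuationKernel P β γ)⁻¹ *ᵥ (P *ᵥ β)) i := by
        rw [stoppedKernel, smul_mulVec, ← mulVec_mulVec, ← mulVec_mulVec, hB]; rfl
    _ ≤ γ := mul_le_of_le_one_right hγ0 (hle i)

theorem stoppedKernel_vecMul_le (hP0 : ∀ i j, 0 ≤ P i j) (hP1 : ∀ i, ∑ j, P i j = 1)
    (hβ0 : ∀ i, 0 ≤ β i) (hβ1 : ∀ i, β i ≤ 1) (hγ0 : 0 ≤ γ) (hγ1 : γ < 1) {d : S → R}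
    (hd : 0 ≤ d) (hdP : d ᵥ* P = d) : (d * β) ᵥ* stoppedKernel P β γ ≤ γ • (d * β) := by
  have hK0 := continuationKernel_nonneg hP0 hβ1 hγ0
  have hK1 := continuationKernel_row_sum_lt_one hP0 hP1 hβ0 hγ0 hγ1
  have hR := inv_one_sub_nonneg hK0 hK1
  have hKR : (1 - continuationKernel P β γ) * (1 - continuationKernel P β γ)⁻¹ = 1 :=
    mul_nonsing_inv _ (isUnit_det_one_sub hK0 hK1)
  have hdB : d ᵥ* diagonal β = d * β := funext fun i => vecMul_diagonal d β i
  have hB0 : ∀ i j, 0 ≤ diagonal β i j := fun i j => by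
    rw [diagonal_apply]; split_ifs <;> simp [hβ0]
  have hdK : d ᵥ* (1 - continuationKernel P β γ) = d - γ • (d - d * β) := by
    rw [vecMul_sub, vecMul_one, continuationKernel, vecMul_smul, ← vecMul_vecMul, hdP,
      vecMul_sub, vecMul_one, hdB]
  have hμ : d * β ≤ d ᵥ* (1 - continuationKernel P β γ) := fun i => by
    have : γ * (d i * (1 - β i)) ≤ d i * (1 - β i) :=
      mul_le_of_le_one_left (mul_nonneg (hd i) (sub_nonneg.2 (hβ1 i))) hγ1.le
    rw [hdK]
    simp only [Pi.mul_apply, Pi.sub_apply, Pi.smul_apply, smul_eq_mul]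
    linarith
  have hμR : (d * β) ᵥ* (1 - continuationKernel P β γ)⁻¹ ≤ d :=
    calc (d * β) ᵥ* (1 - continuationKernel P β γ)⁻¹
        ≤ (d ᵥ* (1 - continuationKernel P β γ)) ᵥ* (1 - continuationKernel P β γ)⁻¹ :=
          vecMul_le_vecMul_of_nonneg hR hμ
      _ = d := by rw [vecMul_vecMul, hKR, vecMul_one]
  calc (d * β) ᵥ* stoppedKernel P β γ
      = γ • ((((d * β) ᵥ* (1 - continuationKernel P β γ)⁻¹) ᵥ* P) ᵥ* diagonal β) := by
        rw [stoppedKernel, vecMul_smul, ← vecMul_vecMul, ← vecMul_vecMul]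
    _ ≤ γ • ((d ᵥ* P) ᵥ* diagonal β) := smul_le_smul_of_nonneg_left
        (vecMul_le_vecMul_of_nonneg hB0 (vecMul_le_vecMul_of_nonneg hP0 hμR)) hγ0
    _ = γ • (d * β) := by rw [hdP, hdB]

end StoppedKernel

theorem Matrix.isUnit_of_forall_dotProduct_mulVec_pos {n R : Type*} [Fintype n] [DecidableEq n]
    [Field R] [LinearOrder R] [IsStrictOrderedRing R] {A : Matrix n n R}
    (hA : ∀ w, w ≠ 0 → 0 < w ⬝ᵥ A *ᵥ w) : IsUnit A := by
  rw [isUnit_iff_isUnit_det, isUnit_iff_ne_zero]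
  intro hdet
  obtain ⟨v, hv, hAv⟩ := exists_mulVec_eq_zero_iff.2 hdet
  simpa [hAv] using hA v hv

theorem Matrix.dotProduct_transpose_mul_mul_mulVec {m n R : Type*} [Fintype m] [Fintype n]
    [CommSemiring R] (Φ : Matrix m n R) (G : Matrix m m R) (w : n → R) :
    w ⬝ᵥ (Φᵀ * G * Φ) *ᵥ w = (Φ *ᵥ w) ⬝ᵥ G *ᵥ (Φ *ᵥ w) := by
  rw [← mulVec_mulVec, ← mulVec_mulVec, dotProduct_mulVec, vecMul_transpose]

theorem stmt_10_general {S : Type*} [Fintype S] [DecidableEq S]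
    (P : Matrix S S ℝ) (hP0 : ∀ s s', 0 ≤ P s s') (hP1 : ∀ s, ∑ s', P s s' = 1)
    (β : S → ℝ) (hβ1 : ∀ s, β s ≤ 1)
    (γ : ℝ) (hγ0 : 0 ≤ γ) (hγ1 : γ < 1) (hβpos : ∀ s, 0 < β s)
    (d : S → ℝ) (hd : ∀ s, 0 < d s) (hdP : Matrix.vecMul d P = d)
    (k : ℕ) (Φ : Matrix S (Fin k) ℝ)
    (hΦ : LinearIndependent ℝ (fun j : Fin k => (Φ.transpose j))) :
    let B := diagonal β
    let Pβ := γ • ((1 - γ • (P * (1 - B)))⁻¹ * P * B)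
    let A := Φᵀ * diagonal d * B * (1 - Pβ) * Φ
    (∀ w : Fin k → ℝ, w ≠ 0 → 0 < w ⬝ᵥ A.mulVec w) ∧ IsUnit A := by
  intro B Pβ A
  have hβ0 : ∀ s, 0 ≤ β s := fun s => (hβpos s).le
  have hA : A = Φᵀ * (diagonal (d * β) * (1 - stoppedKernel P β γ)) * Φ := by
    simp only [A, B, Matrix.mul_assoc, diagonal_mul_diagonal]
    rfl
  have hpos : ∀ w : Fin k → ℝ, w ≠ 0 → 0 < w ⬝ᵥ A.mulVec w := fun w hw => by
    rw [hA, dotProduct_transpose_mul_mul_mulVec]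
    exact dotProduct_diagonal_mul_one_sub_mulVec_pos
      (stoppedKernel_nonneg hP0 hP1 hβ0 hβ1 hγ0 hγ1) (fun s => mul_pos (hd s) (hβpos s))
      (stoppedKernel_row_sum_le hP0 hP1 hβ0 hβ1 hγ0 hγ1)
      (stoppedKernel_vecMul_le hP0 hP1 hβ0 hβ1 hγ0 hγ1 (fun s => (hd s).le) hdP) hγ1
      ((mulVec_injective_iff.2 hΦ).ne_iff' (mulVec_zero Φ) |>.2 hw)
  exact ⟨hpos, isUnit_of_forall_dotProduct_mulVec_pos hpos⟩

/-- if `Φ` has linearly independent columns, then the key matrix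
`A = Φᵀ·D·B·(I − P^β)·Φ` satisfies `wᵀ·A·w > 0` for all nonzero `w`; in particular
`A` is invertible. -/
theorem stmt_10 {S : Type*} [Fintype S] [Nonempty S] [DecidableEq S]
    (P : Matrix S S ℝ) (hP0 : ∀ s s', 0 ≤ P s s') (hP1 : ∀ s, ∑ s', P s s' = 1)
    (β : S → ℝ) (hβ0 : ∀ s, 0 ≤ β s) (hβ1 : ∀ s, β s ≤ 1)
    (γ : ℝ) (hγ0 : 0 ≤ γ) (hγ1 : γ < 1) (hβpos : ∀ s, 0 < β s)
    (d : S → ℝ) (hd : ∀ s, 0 < d s) (hdP : Matrix.vecMul d P = d)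
    (k : ℕ) (hk : 0 < k) (Φ : Matrix S (Fin k) ℝ)
    (hΦ : LinearIndependent ℝ (fun j : Fin k => (Φ.transpose j))) :
    let B := diagonal β
    let Pβ := γ • ((1 - γ • (P * (1 - B)))⁻¹ * P * B)
    let A := Φᵀ * diagonal d * B * (1 - Pβ) * Φ
    (∀ w : Fin k → ℝ, w ≠ 0 → 0 < w ⬝ᵥ A.mulVec w) ∧ IsUnit A :=
  stmt_10_general P hP0 hP1 β hβ1 γ hγ0 hγ1 hβpos d hd hdP k Φ hΦ
end

section
/- Let 0 ≤ γ < 1, let d : S → ℝ with D the diagonal matrix D(s,s) = d(s), and let Φ : Matrix S (Fin k) ℝ. Then the matrix equation X = Φᵀ·D·B + γ·X·P·(I−B), in the unknown k×S matrix X, has the unique solution X = Φᵀ·D·B·(I − γ·P·(I−B))⁻¹; moreover this solution satisfies X·(I − γ·P)·Φ = Φᵀ·D·B·(I − P^β)·Φ. -/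
/-!
Because `P` is stochastic and `0 ≤ β ≤ 1`, the matrix `γ • (P * (1 - B))` has nonnegative entries
and row sums at most `γ < 1`, so `M = 1 - γ • (P * (1 - B))` is strictly diagonally dominant and
hence invertible. The trace equation reads `X * M = Φᵀ * D * B`, and the last identity comes from
the splitting `1 - γ • P = M - γ • (P * B)`.
-/

open Matrix

theorem Matrix.det_one_sub_ne_zero_of_sum_norm_lt_one {K n : Type*} [NormedField K] [Fintype n]
    [DecidableEq n] {Q : Matrix n n K} (hQ : ∀ i, ∑ j, ‖Q i j‖ < 1) : (1 - Q).det ≠ 0 := by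
  refine det_ne_zero_of_sum_row_lt_diag fun i => ?_
  have hoff : ∀ j ∈ Finset.univ.erase i, ‖(1 - Q) i j‖ = ‖Q i j‖ := fun j hj => by
    rw [sub_apply, one_apply_ne (Finset.ne_of_mem_erase hj).symm, zero_sub, norm_neg]
  calc ∑ j ∈ Finset.univ.erase i, ‖(1 - Q) i j‖
      = ∑ j, ‖Q i j‖ - ‖Q i i‖ := by
        rw [Finset.sum_congr rfl hoff, Finset.sum_erase_eq_sub (Finset.mem_univ i)]
    _ < 1 - ‖Q i i‖ := by linarith [hQ i]
    _ = ‖(1 : K)‖ - ‖Q i i‖ := by rw [norm_one]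
    _ ≤ ‖(1 - Q) i i‖ := by rw [sub_apply, one_apply_eq]; exact norm_sub_norm_le _ _

theorem Matrix.sum_norm_smul_mul_one_sub_diagonal_lt_one {S : Type*} [Fintype S] [DecidableEq S]
    {P : Matrix S S ℝ} (hP0 : ∀ s s', 0 ≤ P s s') (hP1 : ∀ s, ∑ s', P s s' = 1)
    {β : S → ℝ} (hβ0 : ∀ s, 0 ≤ β s) (hβ1 : ∀ s, β s ≤ 1)
    {γ : ℝ} (hγ0 : 0 ≤ γ) (hγ1 : γ < 1) (s : S) :
    ∑ s', ‖(γ • (P * (1 - diagonal β))) s s'‖ < 1 := by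
  have h1B : 1 - diagonal β = diagonal fun s => 1 - β s := by
    rw [← diagonal_one, ← diagonal_sub]
  have hentry : ∀ s', (γ • (P * (1 - diagonal β))) s s' = γ * (P s s' * (1 - β s')) := fun s' => by
    rw [h1B, smul_apply, mul_diagonal, smul_eq_mul]
  calc ∑ s', ‖(γ • (P * (1 - diagonal β))) s s'‖
      = γ * ∑ s', P s s' * (1 - β s') := by
        rw [Finset.mul_sum]
        refine Finset.sum_congr rfl fun s' _ => ?_
        rw [hentry, Real.norm_of_nonneg
          (mul_nonneg hγ0 (mul_nonneg (hP0 s s') (sub_nonneg.2 (hβ1 s'))))]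
    _ ≤ γ * ∑ s', P s s' := by
        gcongr with s'
        exact mul_le_of_le_one_right (hP0 s s') (sub_le_self _ (hβ0 s'))
    _ < 1 := by rw [hP1, mul_one]; exact hγ1

theorem Matrix.eq_add_mul_one_sub_iff {m n α : Type*} [Fintype n] [DecidableEq n] [CommRing α]
    {M : Matrix n n α} (hM : IsUnit M.det) (C X : Matrix m n α) :
    X = C + X * (1 - M) ↔ X = C * M⁻¹ := by
  have := M.invertibleOfIsUnitDet hM
  rw [eq_comm (a := X) (b := C * M⁻¹), mul_inv_eq_iff_eq_mul_of_invertible, Matrix.mul_sub,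
    Matrix.mul_one, add_sub, eq_sub_iff_add_eq, add_comm C X, add_right_inj, eq_comm]

theorem Matrix.inv_mul_one_sub_smul_eq {n α : Type*} [Fintype n] [DecidableEq n] [CommRing α]
    {M : Matrix n n α} (hM : IsUnit M.det) (γ : α) (P B : Matrix n n α)
    (hMdef : M = 1 - γ • (P * (1 - B))) :
    M⁻¹ * (1 - γ • P) = 1 - γ • (M⁻¹ * P * B) := by
  have hsplit : 1 - γ • P = M - γ • (P * B) := by
    rw [hMdef, mul_sub, mul_one, smul_sub]; abel
  rw [hsplit, mul_sub, nonsing_inv_mul M hM, Matrix.mul_smul, Matrix.mul_assoc]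

theorem stmt_16_general {S : Type*} [Fintype S] [DecidableEq S]
    (P : Matrix S S ℝ) (hP0 : ∀ s s', 0 ≤ P s s') (hP1 : ∀ s, ∑ s', P s s' = 1)
    (β : S → ℝ) (hβ0 : ∀ s, 0 ≤ β s) (hβ1 : ∀ s, β s ≤ 1)
    (γ : ℝ) (hγ0 : 0 ≤ γ) (hγ1 : γ < 1)
    (d : S → ℝ) (k : ℕ) (Φ : Matrix S (Fin k) ℝ) :
    let B := diagonal β
    let Pβ := γ • ((1 - γ • (P * (1 - B)))⁻¹ * P * B)
    let X₀ := Φᵀ * diagonal d * B * (1 - γ • (P * (1 - B)))⁻¹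
    (X₀ = Φᵀ * diagonal d * B + γ • (X₀ * P * (1 - B))) ∧
    (∀ X : Matrix (Fin k) S ℝ,
      X = Φᵀ * diagonal d * B + γ • (X * P * (1 - B)) → X = X₀) ∧
    X₀ * (1 - γ • P) * Φ = Φᵀ * diagonal d * B * (1 - Pβ) * Φ := by
  intro B Pβ X₀
  set M := 1 - γ • (P * (1 - B)) with hM
  have hMdet : IsUnit M.det := (det_one_sub_ne_zero_of_sum_norm_lt_one
    (sum_norm_smul_mul_one_sub_diagonal_lt_one hP0 hP1 hβ0 hβ1 hγ0 hγ1)).isUnit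
  have hsolve (X : Matrix (Fin k) S ℝ) :
      X = Φᵀ * diagonal d * B + γ • (X * P * (1 - B)) ↔ X = X₀ := by
    rw [← eq_add_mul_one_sub_iff hMdet, hM, sub_sub_cancel, Matrix.mul_smul,
      ← Matrix.mul_assoc X P]
  refine ⟨(hsolve X₀).2 rfl, fun X => (hsolve X).1, ?_⟩
  rw [Matrix.mul_assoc (Φᵀ * diagonal d * B), inv_mul_one_sub_smul_eq hMdet γ P B hM]

/-- the stationary expected eligibility-trace equation
`X = Φᵀ·D·B + γ·X·P·(I−B)` has the unique solution
`X = Φᵀ·D·B·(I − γ·P·(I−B))⁻¹`, and this solution satisfies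
`X·(I − γ·P)·Φ = Φᵀ·D·B·(I − P^β)·Φ`. -/
theorem stmt_16 {S : Type*} [Fintype S] [Nonempty S] [DecidableEq S]
    (P : Matrix S S ℝ) (hP0 : ∀ s s', 0 ≤ P s s') (hP1 : ∀ s, ∑ s', P s s' = 1)
    (β : S → ℝ) (hβ0 : ∀ s, 0 ≤ β s) (hβ1 : ∀ s, β s ≤ 1)
    (γ : ℝ) (hγ0 : 0 ≤ γ) (hγ1 : γ < 1)
    (d : S → ℝ) (k : ℕ) (hk : 0 < k) (Φ : Matrix S (Fin k) ℝ) :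
    let B := diagonal β
    let Pβ := γ • ((1 - γ • (P * (1 - B)))⁻¹ * P * B)
    let X₀ := Φᵀ * diagonal d * B * (1 - γ • (P * (1 - B)))⁻¹
    (X₀ = Φᵀ * diagonal d * B + γ • (X₀ * P * (1 - B))) ∧
    (∀ X : Matrix (Fin k) S ℝ,
      X = Φᵀ * diagonal d * B + γ • (X * P * (1 - B)) → X = X₀) ∧
    X₀ * (1 - γ • P) * Φ = Φᵀ * diagonal d * B * (1 - Pβ) * Φ :=
  stmt_16_general P hP0 hP1 β hβ0 hβ1 γ hγ0 hγ1 d k Φ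
end
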